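/- arXiv:1907.01494 — 2 statements merged into one kernel-verified Lean document; each statement's English description precedes it below -/
import Mathlib

section
/- Let (A,B) be a nonempty, bounded, closed and convex pair in a reflexive and strictly convex Banach space X. If x₁, x₂ ∈ A₀ and u₁, u₂ ∈ B₀ satisfy ‖x₁−u₁‖ = dist(A,B) and ‖x₂−u₂‖ = dist(A,B), then for every t ∈ [0,1], ‖(t x₁ + (1−t) x₂) − (t u₁ + (1−t) u₂)‖ = dist(A,B); in particular the proximity projection P on A₀ ∪ B₀ is an affine mapping. -/
open Set

/-- `setDist A B = inf {‖x - y‖ : x ∈ A, y ∈ B}`. -/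
noncomputable def setDist {X : Type*} [NormedAddCommGroup X] (A B : Set X) : ℝ :=
  sInf ((fun p : X × X => ‖p.1 - p.2‖) '' (A ×ˢ B))

/-- `A₀ = {x ∈ A : ‖x - y‖ = dist(A,B) for some y ∈ B}`. -/
noncomputable def proxA {X : Type*} [NormedAddCommGroup X] (A B : Set X) : Set X :=
  {x ∈ A | ∃ y ∈ B, ‖x - y‖ = setDist A B}

/-- `B₀ = {y ∈ B : ‖x - y‖ = dist(A,B) for some x ∈ A}`. -/
noncomputable def proxB {X : Type*} [NormedAddCommGroup X] (A B : Set X) : Set X :=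
  {y ∈ B | ∃ x ∈ A, ‖x - y‖ = setDist A B}

/-!
The segment `t ↦ (t x₁ + (1-t) x₂, t u₁ + (1-t) u₂)` stays in `A × B` by convexity, so its
gap is at least `dist(A,B)`; the gap `t (x₁ - u₁) + (1-t) (x₂ - u₂)` is also at most
`t ‖x₁ - u₁‖ + (1-t) ‖x₂ - u₂‖ = dist(A,B)` by the triangle inequality.
-/

theorem setDist_le_norm_sub {X : Type*} [NormedAddCommGroup X] {A B : Set X} {x y : X}
    (hx : x ∈ A) (hy : y ∈ B) : setDist A B ≤ ‖x - y‖ :=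
  csInf_le ⟨0, by rintro _ ⟨p, -, rfl⟩; exact norm_nonneg _⟩ ⟨(x, y), ⟨hx, hy⟩, rfl⟩

theorem norm_sub_combo_le {X : Type*} [NormedAddCommGroup X] [NormedSpace ℝ X]
    (x₁ x₂ u₁ u₂ : X) {s t : ℝ} (hs : 0 ≤ s) (ht : 0 ≤ t) :
    ‖(s • x₁ + t • x₂) - (s • u₁ + t • u₂)‖ ≤ s * ‖x₁ - u₁‖ + t * ‖x₂ - u₂‖ := by
  calc ‖(s • x₁ + t • x₂) - (s • u₁ + t • u₂)‖
      = ‖s • (x₁ - u₁) + t • (x₂ - u₂)‖ := by rw [smul_sub, smul_sub, add_sub_add_comm]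
    _ ≤ ‖s • (x₁ - u₁)‖ + ‖t • (x₂ - u₂)‖ := norm_add_le _ _
    _ = s * ‖x₁ - u₁‖ + t * ‖x₂ - u₂‖ := by
      rw [norm_smul, norm_smul, Real.norm_of_nonneg hs, Real.norm_of_nonneg ht]

theorem proximity_projection_affine_general
    {X : Type*} [NormedAddCommGroup X] [NormedSpace ℝ X]
    (A B : Set X)
    (hAconv : Convex ℝ A) (hBconv : Convex ℝ B)
    (x₁ x₂ u₁ u₂ : X) (hx₁ : x₁ ∈ proxA A B) (hx₂ : x₂ ∈ proxA A B)
    (hu₁ : u₁ ∈ proxB A B) (hu₂ : u₂ ∈ proxB A B)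
    (h₁ : ‖x₁ - u₁‖ = setDist A B) (h₂ : ‖x₂ - u₂‖ = setDist A B) :
    ∀ t : ℝ, t ∈ Set.Icc (0 : ℝ) 1 →
      ‖(t • x₁ + (1 - t) • x₂) - (t • u₁ + (1 - t) • u₂)‖ = setDist A B := by
  rintro t ⟨ht₀, ht₁⟩
  have hs₀ : 0 ≤ 1 - t := sub_nonneg.mpr ht₁
  refine le_antisymm ?_ (setDist_le_norm_sub (hAconv hx₁.1 hx₂.1 ht₀ hs₀ (by ring))
    (hBconv hu₁.1 hu₂.1 ht₀ hs₀ (by ring)))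
  calc _ ≤ t * ‖x₁ - u₁‖ + (1 - t) * ‖x₂ - u₂‖ := norm_sub_combo_le x₁ x₂ u₁ u₂ ht₀ hs₀
    _ = setDist A B := by rw [h₁, h₂]; ring

/-- The proximity projection on `A₀ ∪ B₀` is affine: convex combinations of proximal pairs are
again at distance `dist(A,B)`. -/
theorem proximity_projection_affine
    {X : Type*} [NormedAddCommGroup X] [NormedSpace ℝ X] [CompleteSpace X]
    [StrictConvexSpace ℝ X]
    (hrefl : Function.Surjective (NormedSpace.inclusionInDoubleDual ℝ X))
    (A B : Set X) (hA : A.Nonempty) (hB : B.Nonempty)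
    (hAbd : Bornology.IsBounded A) (hBbd : Bornology.IsBounded B)
    (hAcl : IsClosed A) (hBcl : IsClosed B)
    (hAconv : Convex ℝ A) (hBconv : Convex ℝ B)
    (x₁ x₂ u₁ u₂ : X) (hx₁ : x₁ ∈ proxA A B) (hx₂ : x₂ ∈ proxA A B)
    (hu₁ : u₁ ∈ proxB A B) (hu₂ : u₂ ∈ proxB A B)
    (h₁ : ‖x₁ - u₁‖ = setDist A B) (h₂ : ‖x₂ - u₂‖ = setDist A B) :
    ∀ t : ℝ, t ∈ Set.Icc (0 : ℝ) 1 →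
      ‖(t • x₁ + (1 - t) • x₂) - (t • u₁ + (1 - t) • u₂)‖ = setDist A B :=
  proximity_projection_affine_general A B hAconv hBconv x₁ x₂ u₁ u₂ hx₁ hx₂ hu₁ hu₂ h₁ h₂
end

section
/- Let (A,B) be a nonempty, bounded, closed and convex pair in a uniformly convex Banach space X and let T : A ∪ B → A ∪ B be a noncyclic contraction. Fix x₀ ∈ A₀ and define x_n := Tⁿx₀ and y_n := P x_n for all n ∈ ℕ, where P x_n is the unique point of B₀ with ‖x_n − Px_n‖ = dist(A,B). Then the sequence {(x_n, y_n)} ⊆ A₀ × B₀ converges to a best proximity pair of T: there exists (p,q) ∈ A₀ × B₀ with Tp = p, Tq = q, ‖p−q‖ = dist(A,B), x_n → p and y_n → q. -/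
/-! Since `T` moves the nearest point `P xₙ` to a point at distance `dist(A,B)` from `xₙ₊₁`,
uniqueness of nearest points (strict convexity) makes `yₙ` the orbit `Tⁿ y₀`. For orbits of a
noncyclic contraction, `‖Tⁿ⁺ᵏ a - Tⁿ b‖ ≤ dist(A,B) + αⁿ M` with `M` a bound of `‖a' - b'‖` on
`A × B`, so `Tⁿ b` is almost nearest in `A` to all later points of the orbit of `a`. In a uniformly
convex space two points of a convex set that are almost nearest to the same point are close,
uniformly in that point; hence both orbits are Cauchy. Their limits `p, q` are at distance
`dist(A,B)`, and letting `n → ∞` in `‖T p - Tⁿ⁺¹ b‖ ≤ α ‖p - Tⁿ b‖ + (1 - α) dist(A,B)` shows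
that `T p` is also nearest to `q`, so `T p = p`; symmetrically `T q = q`. -/

open Set Filter Topology

open Function

section UniformConvexity

variable {X : Type*} [NormedAddCommGroup X] [NormedSpace ℝ X]

theorem exists_forall_norm_add_le_two_sub_mul [UniformConvexSpace X] {ε : ℝ} (hε : 0 < ε) :
    ∃ δ > 0, ∀ r > 0, ∀ x y : X, ‖x‖ ≤ r → ‖y‖ ≤ r → ε * r ≤ ‖x - y‖ →
      ‖x + y‖ ≤ (2 - δ) * r := by
  obtain ⟨δ, hδ, h⟩ := exists_forall_closed_ball_dist_add_le_two_sub X hε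
  refine ⟨δ, hδ, fun r hr x y hx hy hxy => ?_⟩
  have hr' : 0 ≤ r⁻¹ := inv_nonneg.2 hr.le
  have key := @h (r⁻¹ • x)
    (by rwa [norm_smul_of_nonneg hr', inv_mul_le_one₀ hr]) (r⁻¹ • y)
    (by rwa [norm_smul_of_nonneg hr', inv_mul_le_one₀ hr])
    (by rwa [← smul_sub, norm_smul_of_nonneg hr', le_inv_mul_iff₀ hr, mul_comm])
  rwa [← smul_add, norm_smul_of_nonneg hr', inv_mul_le_iff₀ hr, mul_comm] at key

theorem exists_pos_forall_norm_sub_lt [UniformConvexSpace X] {d ε : ℝ} (hd : 0 ≤ d)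
    (hε : 0 < ε) :
    ∃ η > 0, ∀ {S : Set X}, Convex ℝ S → ∀ z : X, (∀ w ∈ S, d ≤ ‖w - z‖) →
      ∀ u ∈ S, ∀ v ∈ S, ‖u - z‖ ≤ d + η → ‖v - z‖ ≤ d + η → ‖u - v‖ < ε := by
  rcases hd.eq_or_lt with rfl | hd
  · refine ⟨ε / 3, by positivity, fun _ z _ u _ v _ huz hvz => ?_⟩
    calc ‖u - v‖ = ‖(u - z) - (v - z)‖ := by rw [sub_sub_sub_cancel_right]
      _ ≤ ‖u - z‖ + ‖v - z‖ := norm_sub_le _ _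
      _ < ε := by linarith
  obtain ⟨δ, hδ, huc⟩ :=
    exists_forall_norm_add_le_two_sub_mul (X := X) (div_pos hε (by linarith : 0 < d + 1))
  refine ⟨min 1 (δ * d / 3), by positivity, fun hS z hz u hu v hv huz hvz => ?_⟩
  set η := min 1 (δ * d / 3)
  have hη₀ : 0 ≤ η := by positivity
  have hη₁ : η ≤ 1 := min_le_left _ _
  have hηδ : η ≤ δ * d / 3 := min_le_right _ _
  -- the midpoint bound `d ≤ (1 - δ / 2) (d + η)` would force `δ d ≤ 2 η`
  by_contra! huv
  have hsum : ‖(u - z) + (v - z)‖ ≤ (2 - δ) * (d + η) := by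
    refine huc (d + η) (by positivity) _ _ huz hvz ?_
    rw [sub_sub_sub_cancel_right]
    calc ε / (d + 1) * (d + η) ≤ ε := by
          rw [div_mul_eq_mul_div, div_le_iff₀ (by linarith)]; nlinarith
      _ ≤ ‖u - v‖ := huv
  have hmid := hz _ (hS hu hv (by norm_num : (0 : ℝ) ≤ 1 / 2) (by norm_num : (0 : ℝ) ≤ 1 / 2)
    (by norm_num))
  rw [show (1 / 2 : ℝ) • u + (1 / 2 : ℝ) • v - z = (1 / 2 : ℝ) • ((u - z) + (v - z)) by module,
    norm_smul_of_nonneg (by norm_num)] at hmid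
  nlinarith [mul_pos hδ hd, mul_nonneg hδ.le hη₀]

theorem cauchySeq_of_forall_norm_sub_le [UniformConvexSpace X] {S : Set X} (hS : Convex ℝ S)
    {d : ℝ} (hd : 0 ≤ d) {u z : ℕ → X} {r : ℕ → ℝ} (hu : ∀ n, u n ∈ S)
    (hz : ∀ N, ∀ w ∈ S, d ≤ ‖w - z N‖) (hr : Tendsto r atTop (𝓝 0))
    (hur : ∀ N k, ‖u (N + k) - z N‖ ≤ d + r N) : CauchySeq u := by
  refine Metric.cauchySeq_iff'.2 fun ε hε => ?_
  obtain ⟨η, hη, hclose⟩ := exists_pos_forall_norm_sub_lt (X := X) hd hε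
  obtain ⟨N, hN⟩ := (hr.eventually (gt_mem_nhds hη)).exists
  refine ⟨N, fun n hn => ?_⟩
  obtain ⟨k, rfl⟩ := Nat.exists_eq_add_of_le hn
  rw [dist_eq_norm]
  exact hclose hS (z N) (hz N) _ (hu _) _ (hu N) ((hur N k).trans (by linarith))
    ((hur N 0).trans (by linarith))

theorem eq_of_norm_sub_le_of_forall_le [StrictConvexSpace ℝ X] {S : Set X} (hS : Convex ℝ S)
    {z a b : X} {d : ℝ} (hz : ∀ w ∈ S, d ≤ ‖w - z‖) (ha : a ∈ S) (hb : b ∈ S)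
    (haz : ‖a - z‖ ≤ d) (hbz : ‖b - z‖ ≤ d) : a = b := by
  by_contra hab
  have hlt := norm_combo_lt_of_ne haz hbz (sub_left_injective.ne hab)
    (by norm_num : (0 : ℝ) < 1 / 2) (by norm_num : (0 : ℝ) < 1 / 2) (by norm_num)
  have hle := hz _ (hS ha hb (by norm_num : (0 : ℝ) ≤ 1 / 2) (by norm_num : (0 : ℝ) ≤ 1 / 2)
    (by norm_num))
  rw [show (1 / 2 : ℝ) • (a - z) + (1 / 2 : ℝ) • (b - z)
    = (1 / 2 : ℝ) • a + (1 / 2 : ℝ) • b - z by module] at hlt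
  linarith

end UniformConvexity

section NoncyclicContraction

variable {X : Type*} [NormedAddCommGroup X] {A B : Set X}

theorem setDist_nonneg : 0 ≤ setDist A B :=
  Real.sInf_nonneg <| by rintro _ ⟨_, _, rfl⟩; exact norm_nonneg _

theorem setDist_le_norm_sub_s14 {a b : X} (ha : a ∈ A) (hb : b ∈ B) : setDist A B ≤ ‖a - b‖ :=
  csInf_le ⟨0, by rintro _ ⟨_, _, rfl⟩; exact norm_nonneg _⟩ ⟨(a, b), ⟨ha, hb⟩, rfl⟩

def IsBestProximityPair (A B : Set X) (T : X → X) (p q : X) : Prop :=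
  p ∈ A ∧ q ∈ B ∧ T p = p ∧ T q = q ∧ ‖p - q‖ = setDist A B

variable {T : X → X} {α : ℝ}

theorem norm_iterate_sub_le (hTA : MapsTo T A A) (hTB : MapsTo T B B) (hα : 0 ≤ α)
    (hT : ∀ x ∈ A, ∀ y ∈ B, ‖T x - T y‖ ≤ α * ‖x - y‖ + (1 - α) * setDist A B)
    {a b : X} (ha : a ∈ A) (hb : b ∈ B) {M : ℝ} (hab : ‖a - b‖ ≤ M) (n : ℕ) :
    ‖T^[n] a - T^[n] b‖ ≤ setDist A B + α ^ n * M := by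
  induction n with
  | zero => simpa using hab.trans (le_add_of_nonneg_left setDist_nonneg)
  | succ n ih =>
    rw [iterate_succ_apply', iterate_succ_apply']
    calc ‖T (T^[n] a) - T (T^[n] b)‖
        ≤ α * ‖T^[n] a - T^[n] b‖ + (1 - α) * setDist A B :=
          hT _ (hTA.iterate n ha) _ (hTB.iterate n hb)
      _ ≤ α * (setDist A B + α ^ n * M) + (1 - α) * setDist A B := by gcongr
      _ = setDist A B + α ^ (n + 1) * M := by ring

theorem norm_sub_le_of_tendsto_map
    (hT : ∀ x ∈ A, ∀ y ∈ B, ‖T x - T y‖ ≤ α * ‖x - y‖ + (1 - α) * setDist A B)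
    {u v : ℕ → X} (hu : ∀ n, u n ∈ A) (hv : ∀ n, v n ∈ B) {p q p' q' : X}
    (hup : Tendsto u atTop (𝓝 p)) (hvq : Tendsto v atTop (𝓝 q))
    (hup' : Tendsto (fun n => T (u n)) atTop (𝓝 p'))
    (hvq' : Tendsto (fun n => T (v n)) atTop (𝓝 q')) :
    ‖p' - q'‖ ≤ α * ‖p - q‖ + (1 - α) * setDist A B :=
  le_of_tendsto_of_tendsto' (hup'.sub hvq').norm
    (((hup.sub hvq).norm.const_mul α).add_const _) fun n => hT _ (hu n) _ (hv n)

variable [NormedSpace ℝ X]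

theorem isBestProximityPair_of_tendsto_iterate [StrictConvexSpace ℝ X]
    (hAcl : IsClosed A) (hBcl : IsClosed B) (hAconv : Convex ℝ A) (hBconv : Convex ℝ B)
    (hTA : MapsTo T A A) (hTB : MapsTo T B B)
    (hT : ∀ x ∈ A, ∀ y ∈ B, ‖T x - T y‖ ≤ α * ‖x - y‖ + (1 - α) * setDist A B)
    {a b p q : X} (ha : a ∈ A) (hb : b ∈ B)
    (hp : Tendsto (fun n => T^[n] a) atTop (𝓝 p)) (hq : Tendsto (fun n => T^[n] b) atTop (𝓝 q))
    (hpq : ‖p - q‖ ≤ setDist A B) : IsBestProximityPair A B T p q := by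
  have hpA : p ∈ A := hAcl.mem_of_tendsto hp (.of_forall fun n => hTA.iterate n ha)
  have hqB : q ∈ B := hBcl.mem_of_tendsto hq (.of_forall fun n => hTB.iterate n hb)
  have hpq : ‖p - q‖ = setDist A B := hpq.antisymm (setDist_le_norm_sub_s14 hpA hqB)
  have hTp : ‖T p - q‖ ≤ setDist A B := by
    refine (norm_sub_le_of_tendsto_map hT (fun _ => hpA) (fun n => hTB.iterate n hb)
      tendsto_const_nhds hq tendsto_const_nhds ?_).trans_eq (by rw [hpq]; ring)
    simpa only [iterate_succ_apply'] using (tendsto_add_atTop_iff_nat 1).2 hq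
  have hTq : ‖p - T q‖ ≤ setDist A B := by
    refine (norm_sub_le_of_tendsto_map hT (fun n => hTA.iterate n ha) (fun _ => hqB)
      hp tendsto_const_nhds ?_ tendsto_const_nhds).trans_eq (by rw [hpq]; ring)
    simpa only [iterate_succ_apply'] using (tendsto_add_atTop_iff_nat 1).2 hp
  refine ⟨hpA, hqB, ?_, ?_, hpq⟩
  · exact eq_of_norm_sub_le_of_forall_le hAconv (fun w hw => setDist_le_norm_sub_s14 hw hqB)
      (hTA hpA) hpA hTp hpq.le
  · refine eq_of_norm_sub_le_of_forall_le hBconv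
      (fun w hw => (setDist_le_norm_sub_s14 hpA hw).trans_eq (norm_sub_rev _ _)) (hTB hqB) hqB ?_ ?_
    · rwa [norm_sub_rev]
    · rw [norm_sub_rev, hpq]

theorem exists_isBestProximityPair_tendsto_iterate [UniformConvexSpace X] [CompleteSpace X]
    (hAbd : Bornology.IsBounded A) (hBbd : Bornology.IsBounded B)
    (hAcl : IsClosed A) (hBcl : IsClosed B) (hAconv : Convex ℝ A) (hBconv : Convex ℝ B)
    (hTA : MapsTo T A A) (hTB : MapsTo T B B) (hα₀ : 0 ≤ α) (hα₁ : α < 1)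
    (hT : ∀ x ∈ A, ∀ y ∈ B, ‖T x - T y‖ ≤ α * ‖x - y‖ + (1 - α) * setDist A B)
    {a b : X} (ha : a ∈ A) (hb : b ∈ B) :
    ∃ p q, IsBestProximityPair A B T p q ∧ Tendsto (fun n => T^[n] a) atTop (𝓝 p) ∧
      Tendsto (fun n => T^[n] b) atTop (𝓝 q) := by
  obtain ⟨M, hM⟩ := Metric.isBounded_iff.1 (hAbd.union hBbd)
  have hnear : ∀ N, ∀ a' ∈ A, ∀ b' ∈ B, ‖T^[N] a' - T^[N] b'‖ ≤ setDist A B + α ^ N * M :=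
    fun N a' ha' b' hb' => norm_iterate_sub_le hTA hTB hα₀ hT ha' hb'
      (by rw [← dist_eq_norm]; exact hM (.inl ha') (.inr hb')) N
  have hr : Tendsto (fun N => α ^ N * M) atTop (𝓝 0) := by
    simpa using (tendsto_pow_atTop_nhds_zero_of_lt_one hα₀ hα₁).mul_const M
  obtain ⟨p, hp⟩ := cauchySeq_tendsto_of_complete <|
    cauchySeq_of_forall_norm_sub_le hAconv setDist_nonneg (fun n => hTA.iterate n ha)
      (fun N w hw => setDist_le_norm_sub_s14 hw (hTB.iterate N hb)) hr fun N k => by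
        rw [iterate_add_apply]; exact hnear N _ (hTA.iterate k ha) _ hb
  obtain ⟨q, hq⟩ := cauchySeq_tendsto_of_complete <|
    cauchySeq_of_forall_norm_sub_le hBconv setDist_nonneg (fun n => hTB.iterate n hb)
      (fun N w hw => (setDist_le_norm_sub_s14 (hTA.iterate N ha) hw).trans_eq (norm_sub_rev _ _))
      hr fun N k => by
        rw [norm_sub_rev, iterate_add_apply]; exact hnear N _ ha _ (hTB.iterate k hb)
  have hpq : ‖p - q‖ ≤ setDist A B :=
    le_of_tendsto_of_tendsto' (hp.sub hq).norm (by simpa using hr.const_add (setDist A B))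
      fun n => hnear n a ha b hb
  exact ⟨p, q, isBestProximityPair_of_tendsto_iterate hAcl hBcl hAconv hBconv hTA hTB hT ha hb
    hp hq hpq, hp, hq⟩

end NoncyclicContraction

theorem noncyclic_contraction_best_proximity_pair_convergence_general
    {X : Type*} [NormedAddCommGroup X] [NormedSpace ℝ X] [CompleteSpace X]
    [UniformConvexSpace X]
    (A B : Set X)
    (hAbd : Bornology.IsBounded A) (hBbd : Bornology.IsBounded B)
    (hAcl : IsClosed A) (hBcl : IsClosed B)
    (hAconv : Convex ℝ A) (hBconv : Convex ℝ B)
    (T : X → X) (hTA : Set.MapsTo T A A) (hTB : Set.MapsTo T B B)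
    (α : ℝ) (hα : α ∈ Set.Ioo (0 : ℝ) 1)
    (hT : ∀ x ∈ A, ∀ y ∈ B, ‖T x - T y‖ ≤ α * ‖x - y‖ + (1 - α) * setDist A B)
    (x₀ : X) (hx₀ : x₀ ∈ proxA A B)
    (x y : ℕ → X) (hx : ∀ n, x n = T^[n] x₀)
    (hy : ∀ n, y n ∈ proxB A B ∧ ‖x n - y n‖ = setDist A B) :
    ∃ p ∈ proxA A B, ∃ q ∈ proxB A B, T p = p ∧ T q = q ∧ ‖p - q‖ = setDist A B ∧
      Tendsto x atTop (nhds p) ∧ Tendsto y atTop (nhds q) := by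
  have hxA : ∀ n, x n ∈ A := fun n => hx n ▸ hTA.iterate n hx₀.1
  have hyB : ∀ n, y n ∈ B := fun n => (hy n).1.1
  have hy_succ : ∀ n, y (n + 1) = T (y n) := fun n => by
    refine eq_of_norm_sub_le_of_forall_le hBconv (z := x (n + 1))
      (fun w hw => (setDist_le_norm_sub_s14 (hxA _) hw).trans_eq (norm_sub_rev _ _)) (hyB _)
      (hTB (hyB n)) ((norm_sub_rev _ _).trans (hy _).2).le ?_
    rw [norm_sub_rev, hx, iterate_succ_apply', ← hx]
    calc ‖T (x n) - T (y n)‖ ≤ α * ‖x n - y n‖ + (1 - α) * setDist A B := hT _ (hxA n) _ (hyB n)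
      _ = setDist A B := by rw [(hy n).2]; ring
  have hy_orbit : y = fun n => T^[n] (y 0) := funext fun n => by
    induction n with
    | zero => rfl
    | succ n ih => rw [hy_succ, ih, iterate_succ_apply']
  obtain ⟨p, q, ⟨hpA, hqB, hTp, hTq, hpq⟩, hp, hq⟩ :=
    exists_isBestProximityPair_tendsto_iterate hAbd hBbd hAcl hBcl hAconv hBconv hTA hTB
      hα.1.le hα.2 hT hx₀.1 (hyB 0)
  refine ⟨p, ⟨hpA, q, hqB, hpq⟩, q, ⟨hqB, p, hpA, hpq⟩, hTp, hTq, hpq, ?_, ?_⟩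
  · rwa [funext hx]
  · rwa [hy_orbit]

/-- Gabeleh: in a uniformly convex Banach space, for a nonempty bounded closed convex pair
`(A, B)` and a noncyclic contraction `T`, the sequence `(xₙ, yₙ) = (Tⁿ x₀, P xₙ)` starting at
`x₀ ∈ A₀` converges to a best proximity pair of `T`.  Here `y n` denotes `P (x n)`, the unique
point of `B₀` proximal to `x n`. -/
theorem noncyclic_contraction_best_proximity_pair_convergence
    {X : Type*} [NormedAddCommGroup X] [NormedSpace ℝ X] [CompleteSpace X]
    [UniformConvexSpace X]
    (A B : Set X) (hA : A.Nonempty) (hB : B.Nonempty)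
    (hAbd : Bornology.IsBounded A) (hBbd : Bornology.IsBounded B)
    (hAcl : IsClosed A) (hBcl : IsClosed B)
    (hAconv : Convex ℝ A) (hBconv : Convex ℝ B)
    (T : X → X) (hTA : Set.MapsTo T A A) (hTB : Set.MapsTo T B B)
    (α : ℝ) (hα : α ∈ Set.Ioo (0 : ℝ) 1)
    (hT : ∀ x ∈ A, ∀ y ∈ B, ‖T x - T y‖ ≤ α * ‖x - y‖ + (1 - α) * setDist A B)
    (x₀ : X) (hx₀ : x₀ ∈ proxA A B)
    (x y : ℕ → X) (hx : ∀ n, x n = T^[n] x₀)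
    (hy : ∀ n, y n ∈ proxB A B ∧ ‖x n - y n‖ = setDist A B) :
    ∃ p ∈ proxA A B, ∃ q ∈ proxB A B, T p = p ∧ T q = q ∧ ‖p - q‖ = setDist A B ∧
      Tendsto x atTop (nhds p) ∧ Tendsto y atTop (nhds q) :=
  noncyclic_contraction_best_proximity_pair_convergence_general A B hAbd hBbd hAcl hBcl hAconv
    hBconv T hTA hTB α hα hT x₀ hx₀ x y hx hy
end
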